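/- Let d ≥ 2 and let I : ℝ^d → [0,∞) be Borel measurable and radial, I(ξ) = g(|ξ|) for some g : [0,∞) → [0,∞) which is concave on [0,ε) for some ε > 0. Define δ := sup{α ≥ 0 : lim_{ξ→0} I(ξ)/|ξ|^α = 0} (with sup ∅ := 0). If δ < d, then ∫_{{|ξ|<r}} dξ / I(ξ) < ∞ for all sufficiently small r > 0. -/

import Mathlib

open MeasureTheory Filter Topology Set Metric
open scoped ENNReal

/-!
Pick `α` with `max 1 δ < α < d`. As `α` exceeds the index `δ`, `I ξ / ‖ξ‖ ^ α` does not tend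
to `0`, so `I ξ₀ ≥ c ‖ξ₀‖ ^ α` at some `ξ₀` with `‖ξ₀‖ < ε`. Concavity of `g` on `[0, ε)` with
`g 0 ≥ 0` gives `g s ≥ (s / t) g t` for `s ≤ t`, and since `α ≥ 1` the bound `g s ≥ c s ^ α`
propagates from `t = ‖ξ₀‖` to all smaller `s`. Hence `1 / I ≤ c⁻¹ ‖ξ‖ ^ (-α)` on the ball of
radius `‖ξ₀‖`, which is integrable there because `α < d`.
-/

theorem ConcaveOn.div_mul_le_of_nonneg_at_zero {g : ℝ → ℝ} {ε s t : ℝ}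
    (hg : ConcaveOn ℝ (Ico 0 ε) g) (hg₀ : 0 ≤ g 0) (hs : 0 ≤ s) (hst : s ≤ t) (ht₀ : 0 < t)
    (ht : t < ε) :
    s / t * g t ≤ g s := by
  have hst' : s / t ≤ 1 := div_le_one_of_le₀ hst ht₀.le
  have key := hg.2 (left_mem_Ico.2 (ht₀.trans ht)) ⟨ht₀.le, ht⟩ (sub_nonneg.2 hst')
    (div_nonneg hs ht₀.le) (sub_add_cancel 1 (s / t))
  simp only [smul_eq_mul, mul_zero, zero_add, div_mul_cancel₀ s ht₀.ne'] at key
  nlinarith [mul_nonneg (sub_nonneg.2 hst') hg₀]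

theorem ConcaveOn.mul_rpow_le_of_le {g : ℝ → ℝ} {ε s t c α : ℝ}
    (hg : ConcaveOn ℝ (Ico 0 ε) g) (hg₀ : 0 ≤ g 0) (hα : 1 ≤ α) (hc : 0 ≤ c)
    (ht₀ : 0 < t) (ht : t < ε) (hct : c * t ^ α ≤ g t) (hs : 0 ≤ s) (hst : s ≤ t) :
    c * s ^ α ≤ g s := by
  have hst₀ : 0 ≤ s / t := div_nonneg hs ht₀.le
  have hpow : (s / t) ^ α ≤ s / t :=
    Real.rpow_le_self_of_le_one hst₀ (div_le_one_of_le₀ hst ht₀.le) hα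
  calc c * s ^ α = (s / t) ^ α * (c * t ^ α) := by
        rw [Real.div_rpow hs ht₀.le]
        field_simp
    _ ≤ s / t * g t := by gcongr
    _ ≤ g s := hg.div_mul_le_of_nonneg_at_zero hg₀ hs hst ht₀ ht

theorem exists_mul_rpow_le_of_not_tendsto {E : Type*} [NormedAddCommGroup E] {f : E → ℝ}
    {α ε : ℝ} (hε : 0 < ε)
    (h : ¬Tendsto (fun x => ENNReal.ofReal (f x) / ENNReal.ofReal (‖x‖ ^ α)) (𝓝[≠] 0) (𝓝 0)) :
    ∃ c > 0, ∃ x ≠ 0, ‖x‖ < ε ∧ c * ‖x‖ ^ α ≤ f x := by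
  by_contra! H
  refine h (ENNReal.tendsto_nhds_zero.2 fun e he => ?_)
  filter_upwards [nhdsWithin_le_nhds (ball_mem_nhds 0 hε), self_mem_nhdsWithin] with x hxε hx
  rcases eq_or_ne e ⊤ with rfl | he'
  · exact le_top
  have hxα : 0 < ‖x‖ ^ α := Real.rpow_pos_of_pos (norm_pos_iff.2 hx) α
  calc ENNReal.ofReal (f x) / ENNReal.ofReal (‖x‖ ^ α)
      ≤ ENNReal.ofReal (e.toReal * ‖x‖ ^ α) / ENNReal.ofReal (‖x‖ ^ α) := by
        gcongr
        exact (H _ (ENNReal.toReal_pos he.ne' he') x hx (mem_ball_zero_iff.1 hxε)).le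
    _ = e := by
        rw [ENNReal.ofReal_mul ENNReal.toReal_nonneg, ENNReal.ofReal_toReal he',
          ENNReal.mul_div_cancel_right (ENNReal.ofReal_pos.2 hxα).ne' ENNReal.ofReal_ne_top]

theorem lintegral_ball_inv_lt_top_of_mul_rpow_le {E : Type*} [NormedAddCommGroup E]
    [NormedSpace ℝ E] [FiniteDimensional ℝ E] [MeasurableSpace E] [BorelSpace E]
    {μ : Measure E} [μ.IsAddHaarMeasure] (hd : 1 ≤ Module.finrank ℝ E) {f : E → ℝ} {c α r : ℝ}
    (hc : 0 < c) (hα : α < Module.finrank ℝ E)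
    (hf : ∀ x ∈ ball (0 : E) r, x ≠ 0 → c * ‖x‖ ^ α ≤ f x) :
    ∫⁻ x in ball (0 : E) r, (ENNReal.ofReal (f x))⁻¹ ∂μ < ∞ := by
  have : Nontrivial E := Module.nontrivial_of_finrank_pos (R := ℝ) hd
  have hint : IntegrableOn (fun x : E => c⁻¹ * ‖x‖ ^ (-α)) (ball 0 r) μ := by
    refine integrableOn_ball_of_norm_le_rpow (C := c⁻¹) hd hα (Eventually.of_forall fun x => ?_)
      ((measurable_norm.pow_const (-α)).const_mul c⁻¹).aestronglyMeasurable
    rw [Real.norm_of_nonneg (by positivity)]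
  refine lt_of_le_of_lt (setLIntegral_mono_ae' measurableSet_ball ?_) hint.lintegral_lt_top
  -- `f` may vanish at the origin, where `(ofReal 0)⁻¹ = ∞`; a null set for `μ`.
  filter_upwards [μ.ae_ne 0] with x hx0 hx
  have hpos : 0 < c * ‖x‖ ^ α := mul_pos hc (Real.rpow_pos_of_pos (norm_pos_iff.2 hx0) α)
  rw [← ENNReal.ofReal_inv_of_pos (hpos.trans_le (hf x hx hx0))]
  refine ENNReal.ofReal_le_ofReal ?_
  rw [Real.rpow_neg (norm_nonneg x), ← mul_inv]
  exact inv_anti₀ hpos (hf x hx hx0)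

theorem exists_one_le_lt_of_lt_natCast {d : ℕ} {δ : ℝ≥0∞} (hd : 2 ≤ d) (hδd : δ < d) :
    ∃ α : ℝ, 1 ≤ α ∧ α < d ∧ δ < ENNReal.ofReal α := by
  have hδ : δ.toReal < d := ENNReal.toReal_lt_of_lt_ofReal (by simpa using hδd)
  have hd' : (1 : ℝ) < d := by exact_mod_cast hd
  refine ⟨max 1 ((δ.toReal + d) / 2), le_max_left _ _, max_lt hd' (by linarith), ?_⟩
  rw [ENNReal.lt_ofReal_iff_toReal_lt hδd.ne_top]
  exact (by linarith : δ.toReal < (δ.toReal + d) / 2).trans_le (le_max_right _ _)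

theorem stmt8 (d : ℕ) (hd : 2 ≤ d)
    (I : EuclideanSpace ℝ (Fin d) → ℝ)
    (g : ℝ → ℝ)
    (hgnonneg : ∀ t : ℝ, 0 ≤ t → 0 ≤ g t)
    (hrad : ∀ ξ, I ξ = g ‖ξ‖)
    (ε : ℝ) (hε : 0 < ε)
    (hconc : ConcaveOn ℝ (Set.Ico 0 ε) g)
    (δ : ℝ≥0∞)
    (hδ : δ = ⨆ (α : ℝ) (_ : 0 ≤ α)
      (_ : Tendsto (fun ξ => ENNReal.ofReal (I ξ) / ENNReal.ofReal (‖ξ‖ ^ α))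
        (𝓝[≠] (0 : EuclideanSpace ℝ (Fin d))) (𝓝 0)), ENNReal.ofReal α)
    (hδd : δ < (d : ℝ≥0∞)) :
    ∃ r₀ > (0 : ℝ), ∀ r : ℝ, 0 < r → r < r₀ →
      ∫⁻ ξ in Metric.ball (0 : EuclideanSpace ℝ (Fin d)) r,
        (ENNReal.ofReal (I ξ))⁻¹ < ∞ := by
  obtain ⟨α, hα₁, hαd, hδα⟩ : ∃ α : ℝ, 1 ≤ α ∧ α < d ∧ δ < ENNReal.ofReal α :=
    exists_one_le_lt_of_lt_natCast hd hδd
  have hnot : ¬Tendsto (fun ξ => ENNReal.ofReal (I ξ) / ENNReal.ofReal (‖ξ‖ ^ α))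
      (𝓝[≠] (0 : EuclideanSpace ℝ (Fin d))) (𝓝 0) := fun hT =>
    hδα.not_ge (hδ ▸ le_iSup₂_of_le α (zero_le_one.trans hα₁) (le_iSup_of_le hT le_rfl))
  obtain ⟨c, hc, ξ₀, hξ₀, hξ₀ε, hcξ₀⟩ := exists_mul_rpow_le_of_not_tendsto hε hnot
  refine ⟨‖ξ₀‖, norm_pos_iff.2 hξ₀, fun r _ hr => ?_⟩
  refine lintegral_ball_inv_lt_top_of_mul_rpow_le (by rw [finrank_euclideanSpace_fin]; omega) hc
    (by rwa [finrank_euclideanSpace_fin]) fun ξ hξ _ => ?_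
  rw [hrad] at hcξ₀ ⊢
  exact hconc.mul_rpow_le_of_le (hgnonneg 0 le_rfl) hα₁ hc.le (norm_pos_iff.2 hξ₀) hξ₀ε hcξ₀
    (norm_nonneg ξ) ((mem_ball_zero_iff.1 hξ).le.trans hr.le)
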